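/- arXiv:2512.17829 — 4 statements merged into one kernel-verified Lean document; each statement's English description precedes it below -/
import Mathlib

section
/- Let φ : ℝ² → ℝ be continuously differentiable with φ(x₁, 0) = 0 for every x₁ ∈ ℝ, and let M = sup_{t∈ℝ} |h'(t)|. Then for every η > 0 and ε > 0, ∫_{-1/2}^{1/2} φ(x₁, η h(x₁/ε))² · √(1 + (η/ε)² h'(x₁/ε)²) dx₁ ≤ (1 + (η/ε)² M²)^{1/2} · η · h_max · ∫_{Ω^ε_η} (∂_{x₂} φ(x))² dx. -/
open MeasureTheory Set

lemma cs_on_Ioo {b : ℝ} (hb : 0 ≤ b) {f : ℝ → ℝ} (hf : Continuous f) :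
    (∫ y in Ioo (0:ℝ) b, f y) ^ 2 ≤ b * ∫ y in Ioo (0:ℝ) b, f y ^ 2 := by
  set μ : Measure ℝ := volume.restrict (Ioo (0:ℝ) b) with hμ
  haveI : IsFiniteMeasure μ := ⟨by
    rw [hμ, Measure.restrict_apply_univ, Real.volume_Ioo]
    exact ENNReal.ofReal_lt_top⟩
  obtain ⟨C, hC⟩ := (isCompact_Icc (a := (0:ℝ)) (b := b)).exists_bound_of_continuousOn
    hf.continuousOn
  have hmem : MemLp (fun y => |f y|) (ENNReal.ofReal 2) μ := by
    refine MemLp.of_bound hf.abs.aestronglyMeasurable C ?_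
    refine (ae_restrict_iff' measurableSet_Ioo).2 (ae_of_all _ fun y hy => ?_)
    simpa [Real.norm_eq_abs, abs_abs] using hC y (Ioo_subset_Icc_self hy)
  have hpq : Real.HolderConjugate 2 2 := ⟨by norm_num, by norm_num, by norm_num⟩
  have hone : MemLp (fun _ : ℝ => (1:ℝ)) (ENNReal.ofReal 2) μ := memLp_const 1
  have holder := integral_mul_le_Lp_mul_Lq_of_nonneg hpq
    (ae_of_all _ fun y => abs_nonneg (f y)) (ae_of_all _ fun _ => zero_le_one) hmem hone
  have e1 : ∫ a, |f a| * 1 ∂μ = ∫ a, |f a| ∂μ := by simp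
  have e2 : ∫ a, |f a| ^ (2:ℝ) ∂μ = ∫ a, f a ^ 2 ∂μ := by
    refine integral_congr_ae (ae_of_all _ fun y => ?_)
    simp [Real.rpow_two, sq_abs]
  have e3 : ∫ _ : ℝ, (1:ℝ) ^ (2:ℝ) ∂μ = b := by
    simp [hμ, Real.volume_Ioo, ENNReal.toReal_ofReal hb, hb]
  rw [e1, e2, e3] at holder
  have hI2 : 0 ≤ ∫ a, f a ^ 2 ∂μ := integral_nonneg fun y => sq_nonneg _
  have habs : |∫ a, f a ∂μ| ≤ ∫ a, |f a| ∂μ := by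
    simpa [Real.norm_eq_abs] using norm_integral_le_integral_norm (μ := μ) f
  calc (∫ y in Ioo (0:ℝ) b, f y) ^ 2 = |∫ a, f a ∂μ| ^ 2 := by rw [sq_abs]
    _ ≤ (∫ a, |f a| ∂μ) ^ 2 := pow_le_pow_left₀ (abs_nonneg _) habs 2
    _ ≤ ((∫ a, f a ^ 2 ∂μ) ^ ((1:ℝ)/2) * b ^ ((1:ℝ)/2)) ^ 2 :=
        pow_le_pow_left₀ (integral_nonneg fun y => abs_nonneg _) (by simpa using holder) 2
    _ = b * ∫ a, f a ^ 2 ∂μ := by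
        rw [mul_pow, ← Real.rpow_natCast ((∫ a, f a ^ 2 ∂μ) ^ ((1:ℝ)/2)) 2,
          ← Real.rpow_natCast (b ^ ((1:ℝ)/2)) 2, ← Real.rpow_mul hI2, ← Real.rpow_mul hb]
        norm_num [mul_comm]

/-- Trace estimate on the rough upper wall (Lemma 2.2, estimate (2.9)). -/
theorem trace_estimate_rough_wall
    (h : ℝ → ℝ) (hmin hmax : ℝ)
    (hh : ContDiff ℝ 1 h) (hper : ∀ t, h (t + 1) = h t)
    (hmin_pos : 0 < hmin) (hlb : ∀ t, hmin ≤ h t) (hub : ∀ t, h t ≤ hmax)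
    (M : ℝ) (hM : M = ⨆ t : ℝ, |deriv h t|)
    (φ : ℝ × ℝ → ℝ) (hφ : ContDiff ℝ 1 φ) (hφ0 : ∀ x₁ : ℝ, φ (x₁, 0) = 0)
    (η ε : ℝ) (hη : 0 < η) (hε : 0 < ε) :
    (∫ x₁ in Ioo (-(1:ℝ)/2) (1/2),
        (φ (x₁, η * h (x₁ / ε))) ^ 2
          * Real.sqrt (1 + (η / ε) ^ 2 * (deriv h (x₁ / ε)) ^ 2)) ≤
    (1 + (η / ε) ^ 2 * M ^ 2) ^ ((1:ℝ)/2) * η * hmax *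
      ∫ x in {p : ℝ × ℝ | p.1 ∈ Ioo (-(1:ℝ)/2) (1/2) ∧ p.2 ∈ Ioo 0 (η * h (p.1 / ε))},
        (deriv (fun s => φ (x.1, s)) x.2) ^ 2 := by
  have hccont : Continuous h := hh.continuous
  have hdcont : Continuous (deriv h) := hh.continuous_deriv le_rfl
  have hmax_pos : 0 < hmax := hmin_pos.trans_le ((hlb 0).trans (hub 0))
  -- deriv h is 1-periodic and bounded by M
  have hder_per : Function.Periodic (deriv h) 1 := by
    intro t
    have h1 : (fun x => h (x + 1)) = h := funext hper
    have := deriv_comp_add_const h 1 t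
    rw [h1] at this
    exact this.symm
  have habs_per : Function.Periodic (fun t => |deriv h t|) 1 := fun t =>
    congrArg abs (hder_per t)
  have hbdd : BddAbove (range fun t => |deriv h t|) := by
    obtain ⟨C, hC⟩ := (isCompact_Icc (a := (0:ℝ)) (b := 1)).exists_bound_of_continuousOn
      hdcont.continuousOn
    refine ⟨C, ?_⟩
    rintro _ ⟨t, rfl⟩
    obtain ⟨y, hy, hyeq⟩ := habs_per.exists_mem_Ico₀ one_pos t
    show |deriv h t| ≤ C
    rw [hyeq]
    simpa [Real.norm_eq_abs] using hC y (Ico_subset_Icc_self hy)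
  have hMle : ∀ t, |deriv h t| ≤ M := fun t => hM ▸ le_ciSup hbdd t
  have hM0 : 0 ≤ M := le_trans (abs_nonneg _) (hMle 0)
  -- the partial derivative in the second variable
  set D : ℝ × ℝ → ℝ := fun p => fderiv ℝ φ p (0, 1) with hDdef
  have hDcont : Continuous D := (hφ.continuous_fderiv one_ne_zero).clm_apply continuous_const
  have hslice : ∀ a s : ℝ, HasDerivAt (fun s => φ (a, s)) (D (a, s)) s := by
    intro a s
    have h1 : HasDerivAt (fun s : ℝ => (a, s)) ((0 : ℝ), (1 : ℝ)) s :=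
      (hasDerivAt_const s a).prodMk (hasDerivAt_id s)
    exact ((hφ.differentiable one_ne_zero (a, s)).hasFDerivAt).comp_hasDerivAt s h1
  have hrw : (fun x : ℝ × ℝ => (deriv (fun s => φ (x.1, s)) x.2) ^ 2)
      = fun x : ℝ × ℝ => D x ^ 2 := by
    funext x
    rw [(hslice x.1 x.2).deriv]
  -- the rough domain
  set S : Set (ℝ × ℝ) :=
    {p : ℝ × ℝ | p.1 ∈ Ioo (-(1:ℝ)/2) (1/2) ∧ p.2 ∈ Ioo 0 (η * h (p.1 / ε))} with hSdef
  have hgcont : Continuous fun x : ℝ => η * h (x / ε) :=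
    continuous_const.mul (hccont.comp (continuous_id.div_const ε))
  have hgpos : ∀ x : ℝ, 0 < η * h (x / ε) := fun x =>
    mul_pos hη (hmin_pos.trans_le (hlb _))
  have hgle : ∀ x : ℝ, η * h (x / ε) ≤ η * hmax := fun x =>
    mul_le_mul_of_nonneg_left (hub _) hη.le
  have hSopen : IsOpen S := by
    have : S = ({p : ℝ × ℝ | -(1:ℝ)/2 < p.1} ∩ {p : ℝ × ℝ | p.1 < 1/2}) ∩
        ({p : ℝ × ℝ | 0 < p.2} ∩ {p : ℝ × ℝ | p.2 < η * h (p.1 / ε)}) := by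
      ext p
      simp [hSdef, mem_Ioo, and_assoc]
    rw [this]
    exact (((isOpen_lt continuous_const continuous_fst).inter
      (isOpen_lt continuous_fst continuous_const)).inter
      ((isOpen_lt continuous_const continuous_snd).inter
      (isOpen_lt continuous_snd (hgcont.comp continuous_fst))))
  have hSsub : S ⊆ Icc (-(1:ℝ)/2) (1/2) ×ˢ Icc 0 (η * hmax) := by
    rintro p ⟨hp1, hp2⟩
    exact ⟨Ioo_subset_Icc_self hp1, ⟨hp2.1.le, hp2.2.le.trans (hgle p.1)⟩⟩
  have hFint : IntegrableOn (fun p : ℝ × ℝ => D p ^ 2) S volume :=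
    (((hDcont.pow 2).continuousOn).integrableOn_compact
      (isCompact_Icc.prod isCompact_Icc)).mono_set hSsub
  have hind : Integrable (S.indicator fun p : ℝ × ℝ => D p ^ 2) volume :=
    hFint.integrable_indicator hSopen.measurableSet
  have hind' : Integrable (S.indicator fun p : ℝ × ℝ => D p ^ 2)
      ((volume : Measure ℝ).prod volume) := by
    rwa [← Measure.volume_eq_prod]
  -- the inner-integral function
  have hfun : (fun x : ℝ => ∫ y : ℝ, S.indicator (fun p : ℝ × ℝ => D p ^ 2) (x, y))
      = (Ioo (-(1:ℝ)/2) (1/2)).indicator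
        (fun x : ℝ => ∫ y in Ioo 0 (η * h (x / ε)), D (x, y) ^ 2) := by
    funext x
    by_cases hx : x ∈ Ioo (-(1:ℝ)/2) (1/2)
    · rw [indicator_of_mem hx, ← integral_indicator (measurableSet_Ioo (a := (0:ℝ)))]
      congr 1
      funext y
      by_cases hy : y ∈ Ioo (0:ℝ) (η * h (x / ε))
      · rw [indicator_of_mem hy, indicator_of_mem (by exact ⟨hx, hy⟩)]
      · rw [indicator_of_notMem hy, indicator_of_notMem (fun hm => hy hm.2)]
    · rw [indicator_of_notMem hx]
      have : ∀ y : ℝ, S.indicator (fun p : ℝ × ℝ => D p ^ 2) (x, y) = 0 := fun y =>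
        indicator_of_notMem (fun hm => hx hm.1) _
      simp [this]
  have key : ∫ p in S, D p ^ 2
      = ∫ x in Ioo (-(1:ℝ)/2) (1/2), ∫ y in Ioo 0 (η * h (x / ε)), D (x, y) ^ 2 := by
    rw [← integral_indicator hSopen.measurableSet]
    rw [show (volume : Measure (ℝ × ℝ)) = (volume : Measure ℝ).prod volume from
      Measure.volume_eq_prod ℝ ℝ, integral_prod _ hind', hfun,
      integral_indicator (measurableSet_Ioo)]
  have hGint : IntegrableOn (fun x : ℝ => ∫ y in Ioo 0 (η * h (x / ε)), D (x, y) ^ 2)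
      (Ioo (-(1:ℝ)/2) (1/2)) volume := by
    have := hind'.integral_prod_left
    rw [hfun] at this
    exact (integrable_indicator_iff measurableSet_Ioo).1 this
  -- continuity / integrability of the left-hand integrand
  have hLcont : Continuous (fun x : ℝ => (φ (x, η * h (x / ε))) ^ 2
      * Real.sqrt (1 + (η / ε) ^ 2 * (deriv h (x / ε)) ^ 2)) := by
    have h1 : Continuous fun x : ℝ => φ (x, η * h (x / ε)) :=
      hφ.continuous.comp (continuous_id.prodMk hgcont)
    have h2 : Continuous fun x : ℝ => deriv h (x / ε) :=
      hdcont.comp (continuous_id.div_const ε)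
    exact (h1.pow 2).mul (Real.continuous_sqrt.comp
      (continuous_const.add (continuous_const.mul (h2.pow 2))))
  have hLint : IntegrableOn (fun x : ℝ => (φ (x, η * h (x / ε))) ^ 2
      * Real.sqrt (1 + (η / ε) ^ 2 * (deriv h (x / ε)) ^ 2))
      (Ioo (-(1:ℝ)/2) (1/2)) volume :=
    (hLcont.integrableOn_Icc).mono_set Ioo_subset_Icc_self
  set A : ℝ := (1 + (η / ε) ^ 2 * M ^ 2) ^ ((1:ℝ)/2) with hAdef
  have hA0 : 0 ≤ A := Real.rpow_nonneg (by positivity) _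
  -- pointwise estimate
  have hpt : ∀ x ∈ Ioo (-(1:ℝ)/2) (1/2),
      (φ (x, η * h (x / ε))) ^ 2 * Real.sqrt (1 + (η / ε) ^ 2 * (deriv h (x / ε)) ^ 2)
        ≤ A * η * hmax * ∫ y in Ioo 0 (η * h (x / ε)), D (x, y) ^ 2 := by
    intro x _
    have hGnn : 0 ≤ ∫ y in Ioo 0 (η * h (x / ε)), D (x, y) ^ 2 :=
      integral_nonneg fun y => sq_nonneg _
    have hsq : Real.sqrt (1 + (η / ε) ^ 2 * (deriv h (x / ε)) ^ 2) ≤ A := by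
      rw [hAdef, ← Real.sqrt_eq_rpow]
      apply Real.sqrt_le_sqrt
      have h1 : (deriv h (x / ε)) ^ 2 ≤ M ^ 2 := by
        have := hMle (x / ε)
        nlinarith [abs_nonneg (deriv h (x / ε)), sq_abs (deriv h (x / ε))]
      nlinarith [sq_nonneg (η / ε)]
    have hDxcont : Continuous fun s : ℝ => D (x, s) :=
      hDcont.comp (continuous_const.prodMk continuous_id)
    have hftc : ∫ s in (0:ℝ)..(η * h (x / ε)), D (x, s) = φ (x, η * h (x / ε)) := by
      rw [intervalIntegral.integral_eq_sub_of_hasDerivAt (fun s _ => hslice x s)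
        (hDxcont.intervalIntegrable 0 (η * h (x / ε)))]
      simp [hφ0]
    have hioo : ∫ s in (0:ℝ)..(η * h (x / ε)), D (x, s)
        = ∫ s in Ioo 0 (η * h (x / ε)), D (x, s) := by
      rw [intervalIntegral.integral_of_le (hgpos x).le, integral_Ioc_eq_integral_Ioo]
    have hphi : (φ (x, η * h (x / ε))) ^ 2
        ≤ (η * hmax) * ∫ y in Ioo 0 (η * h (x / ε)), D (x, y) ^ 2 := by
      calc (φ (x, η * h (x / ε))) ^ 2
          = (∫ s in Ioo 0 (η * h (x / ε)), D (x, s)) ^ 2 := by rw [← hftc, hioo]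
        _ ≤ (η * h (x / ε)) * ∫ s in Ioo 0 (η * h (x / ε)), D (x, s) ^ 2 :=
            cs_on_Ioo (hgpos x).le hDxcont
        _ ≤ (η * hmax) * ∫ y in Ioo 0 (η * h (x / ε)), D (x, y) ^ 2 :=
            mul_le_mul_of_nonneg_right (hgle x) hGnn
    have := mul_le_mul hphi hsq (Real.sqrt_nonneg _)
      (mul_nonneg (mul_nonneg hη.le hmax_pos.le) hGnn)
    calc (φ (x, η * h (x / ε))) ^ 2 * Real.sqrt (1 + (η / ε) ^ 2 * (deriv h (x / ε)) ^ 2)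
        ≤ ((η * hmax) * ∫ y in Ioo 0 (η * h (x / ε)), D (x, y) ^ 2) * A := this
      _ = A * η * hmax * ∫ y in Ioo 0 (η * h (x / ε)), D (x, y) ^ 2 := by ring
  rw [hrw, key]
  calc (∫ x in Ioo (-(1:ℝ)/2) (1/2), (φ (x, η * h (x / ε))) ^ 2
        * Real.sqrt (1 + (η / ε) ^ 2 * (deriv h (x / ε)) ^ 2))
      ≤ ∫ x in Ioo (-(1:ℝ)/2) (1/2),
          A * η * hmax * ∫ y in Ioo 0 (η * h (x / ε)), D (x, y) ^ 2 :=
        setIntegral_mono_on hLint ((hGint.const_mul _)) measurableSet_Ioo hpt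
    _ = A * η * hmax * ∫ x in Ioo (-(1:ℝ)/2) (1/2),
          ∫ y in Ioo 0 (η * h (x / ε)), D (x, y) ^ 2 := by
        rw [integral_const_mul]
end

section
/- Let φ̃ : ℝ² → ℝ be continuously differentiable with φ̃(x₁, 0) = 0 for every x₁ ∈ ℝ, and let M = sup_{t∈ℝ} |h'(t)|. Then for every ε > 0, ∫_{-1/2}^{1/2} φ̃(x₁, h(x₁/ε))² · √(1 + ε^{-2} h'(x₁/ε)²) dx₁ ≤ (1 + ε^{-2} M²)^{1/2} · h_max · ∫_{Ω̃^ε} (∂_{z₂} φ̃(x₁,z₂))² dx₁ dz₂. -/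
open MeasureTheory Set

lemma cs_helper (F : ℝ → ℝ) (b : ℝ) (hb : 0 < b)
    (hF : IntegrableOn F (Ioo 0 b)) (hF2 : IntegrableOn (fun s => (F s)^2) (Ioo 0 b)) :
    (∫ s in Ioo 0 b, F s) ^ 2 ≤ b * ∫ s in Ioo 0 b, (F s) ^ 2 := by
  have h0 : (volume : Measure ℝ) (Ioo 0 b) ≠ 0 := by
    simp [Real.volume_Ioo, hb]
  have hT : (volume : Measure ℝ) (Ioo 0 b) ≠ ⊤ := by
    simp [Real.volume_Ioo]
  have hj := (Even.convexOn_pow (even_two) (𝕜 := ℝ)).map_set_average_le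
    (continuous_pow 2).continuousOn isClosed_univ h0 hT
    (Filter.Eventually.of_forall fun _ => mem_univ _) hF (by exact hF2)
  rw [setAverage_eq, setAverage_eq] at hj
  have hvol : (volume : Measure ℝ).real (Ioo 0 b) = b := by
    show ((volume : Measure ℝ) (Ioo 0 b)).toReal = b
    simp [Real.volume_Ioo, ENNReal.toReal_ofReal hb.le]
  rw [hvol] at hj
  simp only [smul_eq_mul, Function.comp] at hj
  have hI2 : 0 ≤ ∫ s in Ioo 0 b, (F s)^2 :=
    integral_nonneg fun s => sq_nonneg _
  calc (∫ s in Ioo 0 b, F s) ^ 2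
      = (b⁻¹ * ∫ s in Ioo 0 b, F s) ^ 2 * (b * b) := by field_simp
    _ ≤ (b⁻¹ * ∫ s in Ioo 0 b, (F s) ^ 2) * (b * b) :=
        mul_le_mul_of_nonneg_right hj (by positivity)
    _ = b * ∫ s in Ioo 0 b, (F s) ^ 2 := by field_simp

/-- Rescaled trace estimate on the rough upper wall (Lemma 2.2, estimate (2.10)). -/
theorem trace_estimate_rescaled_rough_wall
    (h : ℝ → ℝ) (hmin hmax : ℝ)
    (hh : ContDiff ℝ 1 h) (hper : ∀ t, h (t + 1) = h t)
    (hmin_pos : 0 < hmin) (hlb : ∀ t, hmin ≤ h t) (hub : ∀ t, h t ≤ hmax)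
    (M : ℝ) (hM : M = ⨆ t : ℝ, |deriv h t|)
    (φ : ℝ × ℝ → ℝ) (hφ : ContDiff ℝ 1 φ) (hφ0 : ∀ x₁ : ℝ, φ (x₁, 0) = 0)
    (ε : ℝ) (hε : 0 < ε) :
    (∫ x₁ in Ioo (-(1:ℝ)/2) (1/2),
        (φ (x₁, h (x₁ / ε))) ^ 2
          * Real.sqrt (1 + ε⁻¹ ^ 2 * (deriv h (x₁ / ε)) ^ 2)) ≤
    (1 + ε⁻¹ ^ 2 * M ^ 2) ^ ((1:ℝ)/2) * hmax *
      ∫ x in {p : ℝ × ℝ | p.1 ∈ Ioo (-(1:ℝ)/2) (1/2) ∧ p.2 ∈ Ioo 0 (h (p.1 / ε))},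
        (deriv (fun s => φ (x.1, s)) x.2) ^ 2 := by
  have hg_cont : Continuous (deriv h) := hh.continuous_deriv le_rfl
  have hh_cont : Continuous h := hh.continuous
  -- bound on the derivative of h
  have hgper : ∀ t : ℝ, deriv h (t + 1) = deriv h t := by
    intro t
    have e : (fun x => h (x + 1)) = h := funext hper
    have := deriv_comp_add_const h 1 t
    rw [e] at this
    exact this.symm
  have hP : Function.Periodic (fun t => |deriv h t|) 1 := fun t => by simp [hgper t]
  have hbdd : BddAbove (range fun t : ℝ => |deriv h t|) := by
    have hcomp : IsCompact ((fun t : ℝ => |deriv h t|) '' Icc 0 1) :=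
      isCompact_Icc.image hg_cont.abs
    refine hcomp.bddAbove.mono ?_
    rintro x ⟨t, rfl⟩
    obtain ⟨y, hy, hxy⟩ := hP.exists_mem_Ico₀ one_pos t
    exact ⟨y, Ico_subset_Icc_self hy, hxy.symm⟩
  have hbM : ∀ t : ℝ, |deriv h t| ≤ M := fun t => hM ▸ le_ciSup hbdd t
  have hM0 : 0 ≤ M := le_trans (abs_nonneg _) (hbM 0)
  -- partial derivative in the second variable
  have hF_cont : Continuous (fun p : ℝ × ℝ => (fderiv ℝ φ p) ((0:ℝ), (1:ℝ))) :=
    ((ContinuousLinearMap.apply ℝ ℝ ((0:ℝ), (1:ℝ))).continuous).comp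
      (hφ.continuous_fderiv one_ne_zero)
  have hder : ∀ y₁ s : ℝ, HasDerivAt (fun s => φ (y₁, s)) (fderiv ℝ φ (y₁, s) ((0:ℝ),(1:ℝ))) s := by
    intro y₁ s
    have hinner : HasDerivAt (fun s : ℝ => ((y₁ : ℝ), s)) ((0:ℝ), (1:ℝ)) s :=
      (hasDerivAt_const s y₁).prodMk (hasDerivAt_id s)
    exact ((hφ.differentiable one_ne_zero) (y₁, s)).hasFDerivAt.comp_hasDerivAt s hinner
  have hder_eq : ∀ y₁ s : ℝ, deriv (fun s => φ (y₁, s)) s = fderiv ℝ φ (y₁, s) ((0:ℝ),(1:ℝ)) :=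
    fun y₁ s => (hder y₁ s).deriv
  set f : ℝ × ℝ → ℝ := fun p => (fderiv ℝ φ p ((0:ℝ),(1:ℝ))) ^ 2 with hf_def
  have hf : Continuous f := hF_cont.pow 2
  -- rewrite the right-hand side integrand
  have hRHSfun : (fun x : ℝ × ℝ => (deriv (fun s => φ (x.1, s)) x.2) ^ 2) = f := by
    funext p
    rw [hf_def, hder_eq p.1 p.2]
  -- FTC representation of the trace
  have hFTC : ∀ x₁ b : ℝ, 0 < b →
      φ (x₁, b) = ∫ s in Ioo 0 b, fderiv ℝ φ (x₁, s) ((0:ℝ),(1:ℝ)) := by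
    intro x₁ b hb
    have hic : IntervalIntegrable (fun s => fderiv ℝ φ (x₁, s) ((0:ℝ),(1:ℝ))) volume 0 b :=
      (hF_cont.comp (continuous_const.prodMk continuous_id)).intervalIntegrable 0 b
    have hFTC := intervalIntegral.integral_eq_sub_of_hasDerivAt
      (f := fun s => φ (x₁, s)) (fun s _ => hder x₁ s) hic
    rw [hφ0 x₁] at hFTC
    rw [intervalIntegral.integral_of_le hb.le, integral_Ioc_eq_integral_Ioo] at hFTC
    linarith [hFTC]
  -- the constant
  set C : ℝ := Real.sqrt (1 + ε⁻¹ ^ 2 * M ^ 2) with hC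
  have hC0 : 0 ≤ C := Real.sqrt_nonneg _
  have hCrpow : (1 + ε⁻¹ ^ 2 * M ^ 2) ^ ((1:ℝ)/2) = C := (Real.sqrt_eq_rpow _).symm
  have hsqrt_le : ∀ s : ℝ, Real.sqrt (1 + ε⁻¹ ^ 2 * (deriv h s) ^ 2) ≤ C := by
    intro s
    apply Real.sqrt_le_sqrt
    have h1 : (deriv h s) ^ 2 ≤ M ^ 2 := by
      have := hbM s
      nlinarith [abs_nonneg (deriv h s), sq_abs (deriv h s)]
    nlinarith [sq_nonneg ε⁻¹]
  -- the inner integral function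
  set G : ℝ → ℝ := fun x₁ => ∫ z in Ioo 0 (h (x₁ / ε)), f (x₁, z) with hG
  have hG0 : ∀ x₁, 0 ≤ G x₁ := fun x₁ => integral_nonneg fun z => sq_nonneg _
  -- pointwise trace bound
  have hpt : ∀ x₁ : ℝ, (φ (x₁, h (x₁ / ε))) ^ 2
      * Real.sqrt (1 + ε⁻¹ ^ 2 * (deriv h (x₁ / ε)) ^ 2) ≤ C * hmax * G x₁ := by
    intro x₁
    set b := h (x₁ / ε) with hb_def
    have hb : 0 < b := lt_of_lt_of_le hmin_pos (hlb _)
    have hbmax : b ≤ hmax := hub _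
    set F1 : ℝ → ℝ := fun s => fderiv ℝ φ (x₁, s) ((0:ℝ),(1:ℝ)) with hF1
    have hF1c : Continuous F1 := hF_cont.comp (continuous_const.prodMk continuous_id)
    have hi1 : IntegrableOn F1 (Ioo 0 b) :=
      (hF1c.continuousOn.integrableOn_compact isCompact_Icc).mono_set Ioo_subset_Icc_self
    have hi2 : IntegrableOn (fun s => (F1 s)^2) (Ioo 0 b) :=
      ((hF1c.pow 2).continuousOn.integrableOn_compact isCompact_Icc).mono_set Ioo_subset_Icc_self
    have hcs : (φ (x₁, b)) ^ 2 ≤ b * ∫ s in Ioo 0 b, (F1 s) ^ 2 := by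
      rw [hFTC x₁ b hb]
      exact cs_helper F1 b hb hi1 hi2
    have hGval : G x₁ = ∫ s in Ioo 0 b, (F1 s) ^ 2 := rfl
    have hI : 0 ≤ ∫ s in Ioo 0 b, (F1 s) ^ 2 := integral_nonneg fun s => sq_nonneg _
    calc (φ (x₁, b)) ^ 2 * Real.sqrt (1 + ε⁻¹ ^ 2 * (deriv h (x₁ / ε)) ^ 2)
        ≤ (φ (x₁, b)) ^ 2 * C :=
          mul_le_mul_of_nonneg_left (hsqrt_le _) (sq_nonneg _)
      _ ≤ (b * ∫ s in Ioo 0 b, (F1 s) ^ 2) * C := mul_le_mul_of_nonneg_right hcs hC0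
      _ ≤ (hmax * ∫ s in Ioo 0 b, (F1 s) ^ 2) * C :=
          mul_le_mul_of_nonneg_right (mul_le_mul_of_nonneg_right hbmax hI) hC0
      _ = C * hmax * G x₁ := by rw [hGval]; ring
  -- Fubini on the region
  set S : Set (ℝ × ℝ) := {p : ℝ × ℝ | p.1 ∈ Ioo (-(1:ℝ)/2) (1/2) ∧ p.2 ∈ Ioo 0 (h (p.1 / ε))}
    with hS
  have hSopen : IsOpen S := by
    have h1 : IsOpen {p : ℝ × ℝ | p.1 ∈ Ioo (-(1:ℝ)/2) (1/2)} :=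
      (isOpen_Ioo).preimage continuous_fst
    have h2 : IsOpen {p : ℝ × ℝ | 0 < p.2} := isOpen_lt continuous_const continuous_snd
    have h3 : IsOpen {p : ℝ × ℝ | p.2 < h (p.1 / ε)} :=
      isOpen_lt continuous_snd (hh_cont.comp (continuous_fst.div_const ε))
    have : S = {p : ℝ × ℝ | p.1 ∈ Ioo (-(1:ℝ)/2) (1/2)} ∩
        ({p : ℝ × ℝ | 0 < p.2} ∩ {p : ℝ × ℝ | p.2 < h (p.1 / ε)}) := by
      ext p; simp [hS, mem_Ioo, and_assoc]
    rw [this]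
    exact h1.inter (h2.inter h3)
  have hSsub : S ⊆ Icc (-(1:ℝ)/2) (1/2) ×ˢ Icc 0 hmax := by
    rintro ⟨p1, p2⟩ ⟨hp1, hp2⟩
    exact ⟨⟨hp1.1.le, hp1.2.le⟩, ⟨hp2.1.le, hp2.2.le.trans (hub _)⟩⟩
  have hfi : IntegrableOn f S :=
    (hf.continuousOn.integrableOn_compact (isCompact_Icc.prod isCompact_Icc)).mono_set hSsub
  have hind : Integrable (S.indicator f) :=
    hfi.integrable_indicator hSopen.measurableSet
  have hind' : Integrable (S.indicator f) ((volume : Measure ℝ).prod volume) := by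
    rwa [← Measure.volume_eq_prod]
  have hfub := MeasureTheory.integral_prod (S.indicator f) hind'
  rw [← Measure.volume_eq_prod] at hfub
  have hinner : ∀ x₁ : ℝ, (∫ z, S.indicator f (x₁, z))
      = (Ioo (-(1:ℝ)/2) (1/2)).indicator G x₁ := by
    intro x₁
    by_cases hx : x₁ ∈ Ioo (-(1:ℝ)/2) (1/2)
    · rw [indicator_of_mem hx]
      have : (fun z => S.indicator f (x₁, z))
          = (Ioo 0 (h (x₁ / ε))).indicator (fun z => f (x₁, z)) := by
        ext z
        by_cases hz : z ∈ Ioo 0 (h (x₁ / ε))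
        · rw [indicator_of_mem hz, indicator_of_mem (by exact ⟨hx, hz⟩)]
        · rw [indicator_of_notMem hz, indicator_of_notMem (fun hc => hz hc.2)]
      rw [this, integral_indicator measurableSet_Ioo]
    · rw [indicator_of_notMem hx]
      have : (fun z => S.indicator f (x₁, z)) = fun _ => (0:ℝ) := by
        ext z
        exact indicator_of_notMem (fun hc => hx hc.1) f
      rw [this, integral_zero]
  have key : (∫ x in S, f x) = ∫ x₁ in Ioo (-(1:ℝ)/2) (1/2), G x₁ := by
    rw [← integral_indicator hSopen.measurableSet, hfub]
    simp only [hinner]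
    rw [integral_indicator measurableSet_Ioo]
  -- integrability of G on the interval
  have hint2 : Integrable (fun x₁ => ∫ z, S.indicator f (x₁, z)) := hind'.integral_prod_left
  have hint3 : Integrable ((Ioo (-(1:ℝ)/2) (1/2)).indicator G) :=
    hint2.congr (Filter.Eventually.of_forall fun x₁ => hinner x₁)
  have hGint : IntegrableOn G (Ioo (-(1:ℝ)/2) (1/2)) :=
    (integrable_indicator_iff measurableSet_Ioo).mp hint3
  -- integrability of the left-hand side
  have hLc : Continuous (fun x₁ : ℝ => (φ (x₁, h (x₁ / ε))) ^ 2
      * Real.sqrt (1 + ε⁻¹ ^ 2 * (deriv h (x₁ / ε)) ^ 2)) := by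
    have c1 : Continuous (fun x₁ : ℝ => φ (x₁, h (x₁ / ε))) :=
      hφ.continuous.comp (continuous_id.prodMk (hh_cont.comp (continuous_id.div_const ε)))
    have c2 : Continuous (fun x₁ : ℝ => deriv h (x₁ / ε)) :=
      hg_cont.comp (continuous_id.div_const ε)
    exact (c1.pow 2).mul (Real.continuous_sqrt.comp (by fun_prop))
  have hLint : IntegrableOn (fun x₁ : ℝ => (φ (x₁, h (x₁ / ε))) ^ 2
      * Real.sqrt (1 + ε⁻¹ ^ 2 * (deriv h (x₁ / ε)) ^ 2)) (Ioo (-(1:ℝ)/2) (1/2)) :=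
    (hLc.continuousOn.integrableOn_compact isCompact_Icc).mono_set Ioo_subset_Icc_self
  -- conclude
  rw [hRHSfun, hCrpow, key]
  calc (∫ x₁ in Ioo (-(1:ℝ)/2) (1/2), (φ (x₁, h (x₁ / ε))) ^ 2
          * Real.sqrt (1 + ε⁻¹ ^ 2 * (deriv h (x₁ / ε)) ^ 2))
      ≤ ∫ x₁ in Ioo (-(1:ℝ)/2) (1/2), C * hmax * G x₁ := by
        refine setIntegral_mono_on hLint ?_ measurableSet_Ioo (fun x₁ _ => hpt x₁)
        exact (hGint.const_mul (C * hmax))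
    _ = C * hmax * ∫ x₁ in Ioo (-(1:ℝ)/2) (1/2), G x₁ := by
        rw [integral_const_mul]
end

section
/- For t ∈ ℝ let κ(t) = ⌊t + 1/2⌋ (the unique integer k with k − 1/2 ≤ t < k + 1/2). Let n be a natural number, set ε = 1/(2n+1), and let g : ℝ → ℝ be measurable with ∫_{-1/2}^{1/2} g(y)² dy < ∞. Then ∫_{-1/2}^{1/2} ∫_{-1/2}^{1/2} g( ε·κ(x/ε) + ε·z )² dz dx = ∫_{-1/2}^{1/2} g(y)² dy. -/
open MeasureTheory Set

/-- L² isometry property of the unfolding operator (norm relations (3.16)),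
with κ(t) = ⌊t + 1/2⌋ and ε = 1/(2n+1). -/
theorem unfolding_operator_L2_isometry
    (n : ℕ) (ε : ℝ) (hε : ε = 1 / (2 * (n : ℝ) + 1))
    (g : ℝ → ℝ) (hg : Measurable g)
    (hint : IntegrableOn (fun y => (g y) ^ 2) (Ioo (-(1:ℝ)/2) (1/2)) volume) :
    (∫ x in Ioo (-(1:ℝ)/2) (1/2), ∫ z in Ioo (-(1:ℝ)/2) (1/2),
        (g (ε * ((⌊x / ε + 1/2⌋ : ℤ) : ℝ) + ε * z)) ^ 2) =
      ∫ y in Ioo (-(1:ℝ)/2) (1/2), (g y) ^ 2 := by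
  have hden : (0:ℝ) < 2 * (n : ℝ) + 1 := by positivity
  have hεpos : 0 < ε := by rw [hε]; positivity
  have hεinv : ε⁻¹ = 2 * (n : ℝ) + 1 := by rw [hε]; field_simp
  have hε1 : ε * (2 * (n : ℝ) + 1) = 1 := by rw [hε]; field_simp
  -- partition points
  set a : ℕ → ℝ := fun i => ε * i - 1/2 with ha
  have ha0 : a 0 = -(1:ℝ)/2 := by simp [ha]; ring
  have haN : a (2 * n + 1) = 1/2 := by
    simp only [ha]
    push_cast
    rw [hε]; field_simp; ring
  have hamono : Monotone a := by
    intro i j hij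
    simp only [ha]
    have : (i:ℝ) ≤ j := by exact_mod_cast hij
    nlinarith
  set φ : ℝ → ℝ := fun x => ∫ z in Ioo (-(1:ℝ)/2) (1/2),
      (g (ε * ((⌊x / ε + 1/2⌋ : ℤ) : ℝ) + ε * z)) ^ 2 with hφ
  -- floor is constant on each open cell
  have hfloor : ∀ i : ℕ, ∀ x ∈ Ioo (a i) (a (i + 1)), ⌊x / ε + 1/2⌋ = (i : ℤ) - n := by
    intro i x hx
    obtain ⟨hx1, hx2⟩ := hx
    rw [Int.floor_eq_iff]
    have h1 : ε * i - 1/2 < x := hx1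
    have h2 : x < ε * (i + 1) - 1/2 := by
      simpa [ha] using hx2
    have hx' : x / ε = x * ε⁻¹ := by rw [div_eq_mul_inv]
    constructor
    · push_cast
      rw [hx', hεinv]
      nlinarith [mul_lt_mul_of_pos_right h1 hden]
    · push_cast
      rw [hx', hεinv]
      nlinarith [mul_lt_mul_of_pos_right h2 hden]
  -- change of variables for the inner integral
  have hinner : ∀ k : ℤ, (∫ z in Ioo (-(1:ℝ)/2) (1/2),
      (g (ε * (k : ℝ) + ε * z)) ^ 2)
      = ε⁻¹ * ∫ y in (ε * (k:ℝ) - ε/2)..(ε * (k:ℝ) + ε/2), (g y) ^ 2 := by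
    intro k
    rw [← MeasureTheory.integral_Ioc_eq_integral_Ioo,
      ← intervalIntegral.integral_of_le (by norm_num : (-(1:ℝ)/2) ≤ 1/2)]
    have := intervalIntegral.integral_comp_add_mul (a := (-(1:ℝ)/2)) (b := 1/2)
      (f := fun y => (g y) ^ 2) (c := ε) (ne_of_gt hεpos) (ε * (k:ℝ))
    rw [this]
    rw [smul_eq_mul]
    ring_nf
  -- integrability of g² on each cell
  have hgIcc : IntegrableOn (fun y => (g y) ^ 2) (Ioc (-(1:ℝ)/2) (1/2)) volume :=
    hint.congr_set_ae Ioo_ae_eq_Ioc.symm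
  have hgint : ∀ i : ℕ, i < 2 * n + 1 → IntervalIntegrable (fun y => (g y) ^ 2)
      volume (a i) (a (i + 1)) := by
    intro i hi
    rw [intervalIntegrable_iff_integrableOn_Ioc_of_le (hamono (Nat.le_succ i))]
    refine hgIcc.mono_set ?_
    apply Ioc_subset_Ioc
    · rw [← ha0]; exact hamono (Nat.zero_le i)
    · rw [← haN]; exact hamono hi
  -- on each cell, φ is a.e. the constant
  have hφconst : ∀ i : ℕ, EqOn φ (fun _ => ∫ z in Ioo (-(1:ℝ)/2) (1/2),
      (g (ε * (((i : ℤ) - n : ℤ) : ℝ) + ε * z)) ^ 2) (Ioo (a i) (a (i + 1))) := by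
    intro i x hx
    simp only [hφ, hfloor i x hx]
  -- φ is interval integrable on each cell
  have hrestrict : ∀ i : ℕ, volume.restrict (Ioc (a i) (a (i+1)))
      = volume.restrict (Ioo (a i) (a (i+1))) :=
    fun i => (Measure.restrict_congr_set Ioo_ae_eq_Ioc).symm
  have hφint : ∀ i : ℕ, i < 2 * n + 1 → IntervalIntegrable φ volume (a i) (a (i + 1)) := by
    intro i _
    rw [intervalIntegrable_iff_integrableOn_Ioc_of_le (hamono (Nat.le_succ i))]
    unfold IntegrableOn
    rw [hrestrict i]
    refine ((integrableOn_const_iff (C := ∫ z in Ioo (-(1:ℝ)/2) (1/2),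
      (g (ε * (((i : ℤ) - n : ℤ) : ℝ) + ε * z)) ^ 2)).2
      (Or.inr measure_Ioo_lt_top)).congr ?_
    exact ((ae_restrict_iff' measurableSet_Ioo).2 (ae_of_all _
      (fun x hx => (hφconst i hx).symm)))
  -- per-cell computation
  have hcell : ∀ i : ℕ, i < 2 * n + 1 →
      (∫ x in (a i)..(a (i+1)), φ x) = ∫ x in (a i)..(a (i+1)), (g x) ^ 2 := by
    intro i _
    set k : ℤ := (i : ℤ) - n with hk
    have hlo : ε * (k : ℝ) - ε / 2 = a i := by
      simp only [hk, ha]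
      push_cast
      have : ε * ((n:ℝ) + 1/2) = 1/2 := by rw [hε]; field_simp
      nlinarith
    have hhi : ε * (k : ℝ) + ε / 2 = a (i + 1) := by
      simp only [hk, ha]
      push_cast
      have : ε * ((n:ℝ) + 1/2) = 1/2 := by rw [hε]; field_simp
      nlinarith
    rw [intervalIntegral.integral_of_le (hamono (Nat.le_succ i)),
      MeasureTheory.integral_Ioc_eq_integral_Ioo,
      setIntegral_congr_fun measurableSet_Ioo (hφconst i)]
    rw [setIntegral_const, hinner k, hlo, hhi]
    have hvol : (volume (Ioo (a i) (a (i+1)))).toReal = ε := by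
      rw [Real.volume_Ioo, ENNReal.toReal_ofReal (by
        have := hamono (Nat.le_succ i); linarith)]
      simp only [ha]
      push_cast
      ring
    rw [measureReal_def, hvol, smul_eq_mul, ← mul_assoc, mul_inv_cancel₀ (ne_of_gt hεpos), one_mul]
  -- sum over cells
  have hsum1 := intervalIntegral.sum_integral_adjacent_intervals
    (f := φ) (μ := volume) (a := a) (n := 2 * n + 1) (fun i hi => hφint i hi)
  have hsum2 := intervalIntegral.sum_integral_adjacent_intervals
    (f := fun y => (g y) ^ 2) (μ := volume) (a := a) (n := 2 * n + 1)
    (fun i hi => hgint i hi)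
  have hsums : (∫ x in (a 0)..(a (2*n+1)), φ x)
      = ∫ x in (a 0)..(a (2*n+1)), (g x) ^ 2 := by
    rw [← hsum1, ← hsum2]
    exact Finset.sum_congr rfl (fun i hi => hcell i (Finset.mem_range.mp hi))
  rw [ha0, haN] at hsums
  calc (∫ x in Ioo (-(1:ℝ)/2) (1/2), φ x)
      = ∫ x in (-(1:ℝ)/2)..(1/2), φ x := by
        rw [intervalIntegral.integral_of_le (by norm_num : (-(1:ℝ)/2) ≤ 1/2),
          MeasureTheory.integral_Ioc_eq_integral_Ioo]
    _ = ∫ x in (-(1:ℝ)/2)..(1/2), (g x) ^ 2 := hsums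
    _ = ∫ y in Ioo (-(1:ℝ)/2) (1/2), (g y) ^ 2 := by
        rw [intervalIntegral.integral_of_le (by norm_num : (-(1:ℝ)/2) ≤ 1/2),
          MeasureTheory.integral_Ioc_eq_integral_Ioo]
end

section
/- Let h : ℝ → ℝ be continuously differentiable with h(t) > 0 for all t ∈ [−1/2, 1/2], and set I = ∫_{-1/2}^{1/2} h(ξ)³ dξ. Suppose π : ℝ → ℝ is twice continuously differentiable, satisfies h(t)³ π''(t) − 3 h(t)² h'(t) π'(t) = −3 h(t)² h'(t) for all t ∈ [−1/2, 1/2], and π(−1/2) = π(1/2). Then π'(t) = 1 − h(t)³/I for all t ∈ [−1/2, 1/2]; in particular π is unique up to an additive constant. -/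
open MeasureTheory Set intervalIntegral

/-- Uniqueness (up to an additive constant) of the solution of the subcritical
cell ODE (5.14): any periodic solution has the explicit derivative. -/
theorem local_pressure_cell_ODE_uniqueness
    (h : ℝ → ℝ) (hh : ContDiff ℝ 1 h)
    (hpos : ∀ t ∈ Icc (-(1:ℝ)/2) (1/2), 0 < h t)
    (I : ℝ) (hI : I = ∫ ξ in (-(1:ℝ)/2)..(1/2), (h ξ) ^ 3)
    (π : ℝ → ℝ) (hπ : ContDiff ℝ 2 π)
    (hode : ∀ t ∈ Icc (-(1:ℝ)/2) (1/2),
      (h t) ^ 3 * deriv (deriv π) t - 3 * (h t) ^ 2 * deriv h t * deriv π t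
        = -3 * (h t) ^ 2 * deriv h t)
    (hbc : π (-(1:ℝ)/2) = π (1/2)) :
    ∀ t ∈ Icc (-(1:ℝ)/2) (1/2), deriv π t = 1 - (h t) ^ 3 / I := by
  have hab : (-(1:ℝ)/2) < 1/2 := by norm_num
  have hπ2 : ContDiff ℝ ((1:ℕ) + 1) π := by exact_mod_cast hπ
  have hπ' : ContDiff ℝ 1 (deriv π) := (contDiff_succ_iff_deriv.mp hπ2).2.2
  set g : ℝ → ℝ := fun s => (deriv π s - 1) / h s ^ 3 with hg
  -- g has derivative 0 on Icc
  have key : ∀ t ∈ Icc (-(1:ℝ)/2) (1/2), HasDerivAt g 0 t := by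
    intro t ht
    have hht := hpos t ht
    have hne : h t ^ 3 ≠ 0 := by positivity
    have hd1 : HasDerivAt (fun s => deriv π s - 1) (deriv (deriv π) t) t := by
      simpa using ((hπ'.differentiable one_ne_zero t).hasDerivAt).sub_const 1
    have hd2 : HasDerivAt (fun s => h s ^ 3) ((3 : ℝ) * h t ^ 2 * deriv h t) t := by
      have h1 : HasDerivAt (h ^ 3) ((3 : ℝ) * h t ^ 2 * deriv h t) t := by simpa using ((hh.differentiable one_ne_zero t).hasDerivAt).pow 3
      exact h1
    have hdiv := hd1.div hd2 hne
    have hnum : deriv (deriv π) t * h t ^ 3 - (deriv π t - 1) * ((3:ℝ) * h t ^ 2 * deriv h t) = 0 := by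
      have ho := hode t ht
      linear_combination ho
    have : (deriv (deriv π) t * h t ^ 3 - (deriv π t - 1) * ((3:ℝ) * h t ^ 2 * deriv h t)) / (h t ^ 3) ^ 2 = 0 := by
      rw [hnum, zero_div]
    have h0 : HasDerivAt ((fun s => deriv π s - 1) / fun s => h s ^ 3) 0 t := by simpa [this] using hdiv
    exact h0
  -- hence g is constant on Icc
  have hconst : ∀ t ∈ Icc (-(1:ℝ)/2) (1/2), g t = g (-(1:ℝ)/2) := by
    apply constant_of_derivWithin_zero
    · intro x hx
      exact ((key x hx).differentiableAt).differentiableWithinAt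
    · intro x hx
      have hx' : x ∈ Icc (-(1:ℝ)/2) (1/2) := Ico_subset_Icc_self hx
      exact ((key x hx').hasDerivWithinAt).derivWithin (uniqueDiffOn_Icc hab x hx')
  set c : ℝ := g (-(1:ℝ)/2) with hc
  have hder : ∀ t ∈ Icc (-(1:ℝ)/2) (1/2), deriv π t = 1 + c * h t ^ 3 := by
    intro t ht
    have hht := hpos t ht
    have hne : h t ^ 3 ≠ 0 := by positivity
    have := hconst t ht
    rw [hg] at this
    field_simp at this
    linarith
  -- integrate
  have hcontπ' : Continuous (deriv π) := hπ'.continuous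
  have hconth : Continuous h := hh.continuous
  have hint : (∫ ξ in (-(1:ℝ)/2)..(1/2), deriv π ξ) = π (1/2) - π (-(1:ℝ)/2) := by
    apply intervalIntegral.integral_deriv_eq_sub
    · intro x _
      exact (hπ2.differentiable (by norm_num)).differentiableAt
    · exact hcontπ'.intervalIntegrable _ _
  have hint0 : (∫ ξ in (-(1:ℝ)/2)..(1/2), deriv π ξ) = 0 := by
    rw [hint, hbc]; ring
  have hcongr : (∫ ξ in (-(1:ℝ)/2)..(1/2), deriv π ξ)
      = ∫ ξ in (-(1:ℝ)/2)..(1/2), (1 + c * h ξ ^ 3) := by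
    apply intervalIntegral.integral_congr
    intro x hx
    rw [uIcc_of_le hab.le] at hx
    exact hder x hx
  have hval : (∫ ξ in (-(1:ℝ)/2)..(1/2), (1 + c * h ξ ^ 3)) = 1 + c * I := by
    rw [intervalIntegral.integral_add (f := fun _ => (1:ℝ)) (g := fun ξ => c * h ξ ^ 3) (intervalIntegrable_const)
      ((continuous_const.mul (hconth.pow 3)).intervalIntegrable _ _),
      intervalIntegral.integral_const,
      intervalIntegral.integral_const_mul, hI]
    norm_num
  have hIpos : 0 < I := by
    rw [hI]
    apply intervalIntegral.intervalIntegral_pos_of_pos_on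
    · exact (hconth.pow 3).intervalIntegrable _ _
    · intro x hx
      have : x ∈ Icc (-(1:ℝ)/2) (1/2) := Ioo_subset_Icc_self hx
      have := hpos x this
      positivity
    · exact hab
  have hcI : c = -1 / I := by
    have : 1 + c * I = 0 := by rw [← hval, ← hcongr, hint0]
    field_simp
    linarith
  intro t ht
  rw [hder t ht, hcI]
  field_simp
  ring
end
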